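/- Let s ≥ 1 and k ≥ 3 be fixed integers and let F be a fixed k-critical graph on f vertices. There exist a constant C' = C'(F,s) such that for all sufficiently large n the following holds: if G is the graph obtained from the Turán graph T_{k−1}(n) by adding s pairwise disjoint edges inside one part, then the number of copies of F in G satisfies N_F(G) ≤ s·c(n,F) + C'·n^{f−3}. Consequently the lower bound N_F(G) ≥ s·c(n,F) − C·n^{f−3} is tight up to the error term. -/

import Mathlib

open Finset SimpleGraph

/-- Number of `k`-cliques of a graph. -/
noncomputable def cliqueCount {V : Type*} (G : SimpleGraph V) (k : ℕ) : ℕ :=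
  Nat.card {T : Finset V // G.IsNClique k T}

/-- `K_k`-covering number: minimum size of a vertex set meeting every `k`-clique. -/
noncomputable def cliqueCover {V : Type*} [Fintype V] [DecidableEq V]
    (G : SimpleGraph V) (k : ℕ) : ℕ :=
  sInf {m | ∃ S : Finset V, S.card = m ∧ ∀ T : Finset V, G.IsNClique k T → ∃ v ∈ T, v ∈ S}

/-- Number of edges of a graph. -/
noncomputable def edgeCount {V : Type*} (G : SimpleGraph V) : ℕ := Nat.card G.edgeSet

/-- Number of edges of the Turán graph `T_r(n)`. -/
noncomputable def turanEdges (r n : ℕ) : ℕ := edgeCount (turanGraph n r)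

/-- `e(n) = n² - 4⌊n²/4⌋`. -/
def eDef (n : ℕ) : ℕ := n ^ 2 - 4 * (n ^ 2 / 4)

/-- `m_{s,t}(n)`: least `m` such that `4s - 4t - 4m + e(n)` is a perfect square. -/
noncomputable def mst (s t n : ℕ) : ℕ :=
  sInf {m : ℕ | ∃ p : ℕ, (p : ℤ) ^ 2 = 4 * s - 4 * t - 4 * m + eDef n}

/-- `R₃(n,s,t) = (4s - 4t - 4m_{s,t}(n) + e(n))^{1/2}`. -/
noncomputable def R3 (s t n : ℕ) : ℕ :=
  Nat.sqrt (4 * (s : ℤ) - 4 * t - 4 * mst s t n + eDef n).toNat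

/-- Number of copies of `F` in `G`: subgraphs of `G` isomorphic to `F`. -/
noncomputable def copyCount' {α V : Type*} (F : SimpleGraph α) (G : SimpleGraph V) : ℕ :=
  Nat.card {H : G.Subgraph // Nonempty (F ≃g H.coe)}

/-- `F`-covering number of `G`. -/
noncomputable def coverNumber {α V : Type*} [Fintype V] [DecidableEq V]
    (F : SimpleGraph α) (G : SimpleGraph V) : ℕ :=
  sInf {m | ∃ S : Finset V, S.card = m ∧
    ∀ H : G.Subgraph, Nonempty (F ≃g H.coe) → ∃ v ∈ H.verts, v ∈ S}

/-- A graph `F` is `k`-critical. -/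
def IsCritical {α : Type*} (k : ℕ) (F : SimpleGraph α) : Prop :=
  F.chromaticNumber = k ∧ ∃ e ∈ F.edgeSet, (F.deleteEdges {e}).chromaticNumber < k

/-- `c(n,F)`: minimum number of copies of `F` after adding one new edge to `T_{k-1}(n)`. -/
noncomputable def cnF {α : Type*} (k n : ℕ) (F : SimpleGraph α) : ℕ :=
  sInf {c | ∃ u v : Fin n, u ≠ v ∧ ¬ (turanGraph n (k - 1)).Adj u v ∧
    c = copyCount' F (turanGraph n (k - 1) ⊔ fromEdgeSet {s(u, v)})}

/-- `N_k(n,s)` from Theorem 1.3. -/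
def NkBound (k s n : ℕ) : ℕ :=
  if n % (k - 1) = 0 then s * (n / (k - 1)) ^ (k - 3) * (n / (k - 1) - 1)
  else if n % (k - 1) = 1 then s * (n / (k - 1)) ^ (k - 2) - (n / (k - 1)) ^ (k - 3)
  else s * (n / (k - 1) + 1) ^ (n % (k - 1) - 2) * (n / (k - 1)) ^ (k - n % (k - 1))

/-- `R_k(n,s,t)`. -/
noncomputable def Rk (k s t n : ℕ) : ℝ :=
  Real.sqrt ((2 * ((k : ℝ) - 1) * ((s : ℝ) - t) +
    ((k : ℝ) - 1 - (n % (k - 1) : ℕ)) * (n % (k - 1) : ℕ)) / ((k : ℝ) - 2))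

/-- `c(x₁,…,x_{k-1},F)`: copies of `F` in the complete multipartite graph with parts
`Fin (x i)` plus one edge inside part `0`. -/
noncomputable def cParts {α : Type*} (k : ℕ) (x : Fin (k - 1) → ℕ) (F : SimpleGraph α) : ℕ :=
  sInf {c | ∃ i₀ : Fin (k - 1), ∃ a b : Fin (x i₀), (i₀ : ℕ) = 0 ∧ a ≠ b ∧
    c = copyCount' F (completeMultipartiteGraph (fun i => Fin (x i)) ⊔
      fromEdgeSet {s(⟨i₀, a⟩, ⟨i₀, b⟩)})}

/-!
Every copy of `F` in `G = T_{k-1}(n) + {u_i v_i}` uses one of the added edges, because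
`T_{k-1}(n)` is `(k-1)`-colourable and `χ(F) = k`; so it suffices to bound, for each `i`, the
copies containing `u_i` and `v_i`. Those that also contain a third vertex from a fixed set `X_i`
of at most `s + 1` vertices number `O(n^{f-3})`. The others avoid `X_i`, which contains every
other `u_j` and a vertex `w_i`, so their only non-Turán edge is `u_i v_i`. A permutation of the
vertices that swaps the part of `u_i v_i` with the part of an optimal edge `ab` for `c(n, F)`
and maps `u_i, v_i` to `a, b` is a homomorphism of the Turán graph away from `w_i`, so it
carries these copies injectively to copies of `F` in `T_{k-1}(n) + ab`. The vertex `w_i` is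
needed because the two parts may differ in size by one.
-/

lemma Fin.card_filter_mod_eq {n r c : ℕ} (hr : 0 < r) (hc : c < r) :
    #{x : Fin n | (x : ℕ) % r = c} = n / r + if c < n % r then 1 else 0 := by
  have hcount := Nat.count_modEq_card n hr c
  rw [Nat.mod_eq_of_lt hc] at hcount
  rw [← hcount, Nat.count_eq_card_filter_range]
  refine Finset.card_bij (fun x _ => (x : ℕ)) ?_ (fun _ _ _ _ => Fin.ext) ?_
  · simp [Nat.ModEq, Nat.mod_eq_of_lt hc]
  · simp only [Finset.mem_filter, Finset.mem_range, Nat.ModEq, Nat.mod_eq_of_lt hc]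
    exact fun k ⟨hk, hkc⟩ => ⟨⟨k, hk⟩, by simpa using hkc, rfl⟩

lemma Finset.exists_ne_card_erase_le {V : Type*} [DecidableEq V] {A B : Finset V} (a b : V)
    (hAB : #A ≤ #B + 1) (hBA : #B ≤ #A + 1) (hA : 3 ≤ #A) :
    ∃ w, w ≠ a ∧ w ≠ b ∧ #(A.erase w) ≤ #B ∧ #(B.erase w) ≤ #A := by
  have hab : #{a, b} ≤ 2 := card_le_two
  rcases le_total #A #B with h | h
  · obtain ⟨w, hwB, hw⟩ := exists_mem_notMem_of_card_lt_card (s := {a, b}) (t := B) (by omega)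
    simp only [mem_insert, mem_singleton, not_or] at hw
    exact ⟨w, hw.1, hw.2, card_erase_le.trans h, by rw [card_erase_of_mem hwB]; omega⟩
  · obtain ⟨w, hwA, hw⟩ := exists_mem_notMem_of_card_lt_card (s := {a, b}) (t := A) (by omega)
    simp only [mem_insert, mem_singleton, not_or] at hw
    exact ⟨w, hw.1, hw.2, by rw [card_erase_of_mem hwA]; omega, card_erase_le.trans h⟩

lemma Set.InjOn.exists_perm_eqOn_compl_singleton {V : Type*} [Fintype V] {ψ : V → V} {w : V}
    (h : Set.InjOn ψ {w}ᶜ) : ∃ π : Equiv.Perm V, Set.EqOn π ψ {w}ᶜ := by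
  classical
  obtain ⟨g, hg⟩ := Set.MapsTo.exists_equiv_extend_of_card_eq (t := Finset.univ) (by simp)
    (fun _ _ => Finset.mem_coe.2 (Finset.mem_univ _)) h
  exact ⟨g.trans (Equiv.subtypeUnivEquiv Finset.mem_univ), hg⟩

section Recolor
variable {V ι : Type*} [DecidableEq V] (col : V → ι)

lemma exists_perm_map_pair {a b a' b' : V} (hab : a ≠ b) (hab' : a' ≠ b')
    (ha : col a' = col a) (hb : col b' = col b) :
    ∃ π : Equiv.Perm V, π a = a' ∧ π b = b' ∧ ∀ x, col (π x) = col x := by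
  have col_swap : ∀ {p q : V}, col p = col q → ∀ x, col (Equiv.swap p q x) = col x := by
    intro p q hpq x
    rw [Equiv.swap_apply_def]
    split_ifs with h₁ h₂ <;> simp [*]
  set σ := Equiv.swap a a'
  have hσb : col (σ b) = col b' := (col_swap ha.symm b).trans hb.symm
  refine ⟨σ.trans (Equiv.swap (σ b) b'), ?_, by simp, fun x => ?_⟩
  · have hσ : σ a ≠ σ b := σ.injective.ne hab
    simp only [Equiv.trans_apply, σ, Equiv.swap_apply_left] at hσ ⊢
    exact Equiv.swap_apply_of_ne_of_ne hσ hab'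
  · simp only [Equiv.trans_apply]
    rw [col_swap hσb, col_swap ha.symm]

variable [Fintype V] [DecidableEq ι]

lemma exists_injOn_swap_classes {c c' : ι} {w : V}
    (hc : Fintype.card {x // x ≠ w ∧ col x = c} ≤ Fintype.card {x // col x = c'})
    (hc' : Fintype.card {x // x ≠ w ∧ col x = c'} ≤ Fintype.card {x // col x = c}) :
    ∃ ψ : V → V, Set.InjOn ψ {w}ᶜ ∧
      ∀ x ≠ w, col (ψ x) = Equiv.swap c c' (col x) := by
  obtain ⟨g⟩ := Function.Embedding.nonempty_of_card_le hc
  obtain ⟨g'⟩ := Function.Embedding.nonempty_of_card_le hc'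
  let ψ : V → V := fun x =>
    if hx : x ≠ w ∧ col x = c then g ⟨x, hx⟩
    else if hx' : x ≠ w ∧ col x = c' then g' ⟨x, hx'⟩ else x
  have ψ_c : ∀ x (hx : x ≠ w ∧ col x = c), ψ x = g ⟨x, hx⟩ := fun x hx => dif_pos hx
  have ψ_c' : ∀ x (hx : x ≠ w ∧ col x = c'), col x ≠ c → ψ x = g' ⟨x, hx⟩ :=
    fun x hx h => (dif_neg fun h' => h h'.2).trans (dif_pos hx)
  have ψ_other : ∀ x, col x ≠ c → col x ≠ c' → ψ x = x :=
    fun x h h' => (dif_neg fun h'' => h h''.2).trans (dif_neg fun h'' => h' h''.2)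
  have hψ : ∀ x ≠ w, col (ψ x) = Equiv.swap c c' (col x) := by
    intro x hx
    by_cases hA : col x = c
    · rw [ψ_c x ⟨hx, hA⟩, (g _).2, hA, Equiv.swap_apply_left]
    by_cases hB : col x = c'
    · rw [ψ_c' x ⟨hx, hB⟩ hA, (g' _).2, hB, Equiv.swap_apply_right]
    · rw [ψ_other x hA hB, Equiv.swap_apply_of_ne_of_ne hA hB]
  refine ⟨ψ, fun x hx y hy hxy => ?_, hψ⟩
  have hx : x ≠ w := hx
  have hy : y ≠ w := hy
  have hcol : col x = col y := by simpa [hψ x hx, hψ y hy] using congrArg col hxy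
  by_cases hA : col x = c
  · rw [ψ_c x ⟨hx, hA⟩, ψ_c y ⟨hy, hcol ▸ hA⟩] at hxy
    simpa using g.injective (Subtype.ext hxy)
  by_cases hB : col x = c'
  · rw [ψ_c' x ⟨hx, hB⟩ hA, ψ_c' y ⟨hy, hcol ▸ hB⟩ (hcol ▸ hA)] at hxy
    simpa using g'.injective (Subtype.ext hxy)
  · rwa [ψ_other x hA hB, ψ_other y (hcol ▸ hA) (hcol ▸ hB)] at hxy

lemma exists_perm_recolor {a b a' b' : V} (hab : a ≠ b) (hab' : a' ≠ b')
    (hb : col b = col a) (hb' : col b' = col a')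
    (hsize : #{x | col x = col a} ≤ #{x | col x = col a'} + 1)
    (hsize' : #{x | col x = col a'} ≤ #{x | col x = col a} + 1)
    (h3 : 3 ≤ #{x | col x = col a}) :
    ∃ w, w ≠ a ∧ w ≠ b ∧ ∃ π : Equiv.Perm V, π a = a' ∧ π b = b' ∧
      ∀ x y, x ≠ w → y ≠ w → col x ≠ col y → col (π x) ≠ col (π y) := by
  obtain ⟨w, hwa, hwb, hA, hB⟩ := Finset.exists_ne_card_erase_le a b hsize hsize' h3
  have hcard : ∀ c,
      Fintype.card {x // x ≠ w ∧ col x = c} = #(({x | col x = c} : Finset V).erase w) := by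
    intro c
    rw [Fintype.card_subtype]
    congr 1
    ext x
    simp
  obtain ⟨ψ, hψinj, hψ⟩ := exists_injOn_swap_classes col (c := col a) (c' := col a') (w := w)
    (by rwa [hcard, Fintype.card_subtype]) (by rwa [hcard, Fintype.card_subtype])
  obtain ⟨π₀, hπ₀ψ⟩ := hψinj.exists_perm_eqOn_compl_singleton
  have hπ₀ : ∀ x ≠ w, col (π₀ x) = Equiv.swap (col a) (col a') (col x) := fun x hx => by
    rw [hπ₀ψ (Set.mem_compl_singleton_iff.2 hx), hψ x hx]
  have hπ₀a : col (π₀ a) = col a' := by rw [hπ₀ a hwa.symm, Equiv.swap_apply_left]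
  have hπ₀b : col (π₀ b) = col b' := by rw [hπ₀ b hwb.symm, hb, Equiv.swap_apply_left, hb']
  obtain ⟨π₁, hπ₁a, hπ₁b, hπ₁⟩ :=
    exists_perm_map_pair col (π₀.injective.ne hab) hab' hπ₀a.symm hπ₀b.symm
  refine ⟨w, hwa, hwb, π₀.trans π₁, hπ₁a, hπ₁b, fun x y hx hy hxy => ?_⟩
  simp only [Equiv.trans_apply, hπ₁, hπ₀ x hx, hπ₀ y hy]
  exact (Equiv.swap _ _).injective.ne hxy

end Recolor

namespace SimpleGraph

variable {α V W : Type*} {F : SimpleGraph α} {G : SimpleGraph V}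

def copies (F : SimpleGraph α) (G : SimpleGraph V) : Set G.Subgraph :=
  {H | Nonempty (F ≃g H.coe)}

lemma copyCount'_eq_ncard_copies : copyCount' F G = (copies F G).ncard := rfl

lemma ncard_setOf_apply_eq_le [Fintype α] [Fintype V] {ι : Type*} [Fintype ι] (σ : ι → α)
    {y : ι → V} (hy : Function.Injective y) :
    {g : α → V | ∀ i, g (σ i) = y i}.ncard ≤
      Fintype.card V ^ (Fintype.card α - Fintype.card ι) := by
  classical
  rcases Set.eq_empty_or_nonempty {g : α → V | ∀ i, g (σ i) = y i} with h | ⟨g₀, hg₀⟩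
  · simp [h]
  have hσ : Function.Injective σ :=
    .of_comp (f := g₀) (by rwa [show g₀ ∘ σ = y from funext hg₀])
  calc {g : α → V | ∀ i, g (σ i) = y i}.ncard
      ≤ (Set.univ : Set ({a // a ∉ Set.range σ} → V)).ncard := by
        refine Set.ncard_le_ncard_of_injOn (fun g a => g a) (fun _ _ => trivial) ?_
        intro g hg g' hg' h
        funext a
        by_cases ha : a ∈ Set.range σ
        · obtain ⟨i, rfl⟩ := ha
          rw [hg i, hg' i]
        · exact congrFun h ⟨a, ha⟩
    _ = Fintype.card V ^ (Fintype.card α - Fintype.card ι) := by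
        rw [Set.ncard_univ, Nat.card_eq_fintype_card, Fintype.card_fun,
          Fintype.card_subtype_compl, Set.card_range_of_injective hσ]

lemma ncard_setOf_range_supset_le [Fintype α] [Fintype V] (X : Finset V) :
    {g : α → V | ↑X ⊆ Set.range g}.ncard ≤
      Fintype.card α ^ X.card * Fintype.card V ^ (Fintype.card α - X.card) := by
  classical
  have hcover : {g : α → V | ↑X ⊆ Set.range g} ⊆
      ⋃ σ ∈ (Finset.univ : Finset (X → α)), {g | ∀ x, g (σ x) = x} := by
    intro g hg
    choose σ hσ using fun x : X => hg x.2
    exact Set.mem_biUnion (Finset.mem_univ σ) hσ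
  calc {g : α → V | ↑X ⊆ Set.range g}.ncard
      ≤ ∑ σ : X → α, {g : α → V | ∀ x, g (σ x) = x}.ncard :=
        (Set.ncard_le_ncard hcover).trans (Finset.set_ncard_biUnion_le _ _)
    _ ≤ ∑ _σ : X → α, Fintype.card V ^ (Fintype.card α - X.card) := by
        gcongr with σ
        simpa using ncard_setOf_apply_eq_le σ Subtype.val_injective
    _ = _ := by simp

lemma ncard_copies_verts_supset_le [Fintype α] [Fintype V] (X : Finset V) :
    {H ∈ copies F G | ↑X ⊆ H.verts}.ncard ≤
      Fintype.card α ^ X.card * Fintype.card V ^ (Fintype.card α - X.card) := by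
  have : Finite (Copy F G) := .of_injective _ DFunLike.coe_injective
  have hsub : {H ∈ copies F G | ↑X ⊆ H.verts} ⊆
      Copy.toSubgraph '' {φ : Copy F G | ↑X ⊆ Set.range φ} := by
    rintro H ⟨hH, hX⟩
    obtain ⟨φ, -, rfl⟩ := Copy.toSubgraph_surjOn hH
    exact ⟨φ, by simpa [Copy.toSubgraph] using hX, rfl⟩
  calc {H ∈ copies F G | ↑X ⊆ H.verts}.ncard
      ≤ {φ : Copy F G | ↑X ⊆ Set.range φ}.ncard :=
        (Set.ncard_le_ncard hsub).trans (Set.ncard_image_le (Set.toFinite _))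
    _ ≤ {g : α → V | ↑X ⊆ Set.range g}.ncard :=
        Set.ncard_le_ncard_of_injOn (⇑) (fun _ h => h) DFunLike.coe_injective.injOn
    _ ≤ _ := ncard_setOf_range_supset_le X

lemma ncard_copies_le_copyCount'_of_adj {K : SimpleGraph V} [Finite V] :
    {H ∈ copies F G | ∀ x y, H.Adj x y → K.Adj x y}.ncard ≤ copyCount' F K := by
  classical
  rw [copyCount'_eq_ncard_copies]
  refine Set.ncard_le_ncard_of_injOn
    (fun H => if h : ∀ x y, H.Adj x y → K.Adj x y then
      { verts := H.verts, Adj := H.Adj, adj_sub := h _ _, edge_vert := H.edge_vert,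
        symm := H.symm } else ⊥) ?_ ?_
  · rintro H ⟨⟨e⟩, h⟩
    simp only [dif_pos h]
    exact ⟨e⟩
  · rintro H₁ ⟨-, h₁⟩ H₂ ⟨-, h₂⟩ h
    simp only [dif_pos h₁, dif_pos h₂] at h
    exact Subgraph.ext (congrArg (·.verts) h) (congrArg (·.Adj) h)

lemma copyCount'_le_of_copy [Finite W] {G' : SimpleGraph W} (φ : Copy G G') :
    copyCount' F G ≤ copyCount' F G' := by
  simp only [copyCount'_eq_ncard_copies]
  refine Set.ncard_le_ncard_of_injOn (Subgraph.map φ.toHom)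
    (fun H ⟨e⟩ => ⟨e.trans (φ.isoSubgraphMap H)⟩) fun H₁ _ H₂ _ h => ?_
  have hadj : ∀ (H : G.Subgraph) x y, (H.map φ.toHom).Adj (φ x) (φ y) ↔ H.Adj x y := by
    have hφ : Function.Injective φ := φ.injective
    simp [Relation.map_apply, hφ.eq_iff]
  refine Subgraph.ext ((Set.image_injective.2 φ.injective) (congrArg Subgraph.verts h)) ?_
  ext x y
  rw [← hadj, ← hadj, h]

lemma colorable_of_mem_copies {K : SimpleGraph V} {r : ℕ} {H : G.Subgraph} (hH : H ∈ copies F G)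
    (hK : ∀ x y, H.Adj x y → K.Adj x y) (hr : K.Colorable r) : F.Colorable r :=
  let ⟨e⟩ := hH
  hr.of_hom ((⟨Subtype.val, hK _ _⟩ : H.coe →g K).comp e.toHom)

lemma turanGraph_colorable {n r : ℕ} (hr : 0 < r) : (turanGraph n r).Colorable r :=
  ⟨Coloring.mk (fun x => ⟨x % r, Nat.mod_lt _ hr⟩) fun h => by
    simpa [turanGraph_adj, Fin.ext_iff] using h⟩

lemma turanGraph_exists_perm {n r : ℕ} (hr : 0 < r) (hn : 3 * r ≤ n) {a b a' b' : Fin n}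
    (hab : a ≠ b) (hab' : a' ≠ b') (hnab : ¬(turanGraph n r).Adj a b)
    (hnab' : ¬(turanGraph n r).Adj a' b') :
    ∃ w, w ≠ a ∧ w ≠ b ∧ ∃ π : Equiv.Perm (Fin n), π a = a' ∧ π b = b' ∧
      ∀ x y, x ≠ w → y ≠ w → (turanGraph n r).Adj x y →
        (turanGraph n r).Adj (π x) (π y) := by
  simp only [turanGraph_adj, not_not] at hnab hnab' ⊢
  have hsize := Fin.card_filter_mod_eq (n := n) hr (Nat.mod_lt a hr)
  have hsize' := Fin.card_filter_mod_eq (n := n) hr (Nat.mod_lt a' hr)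
  have h3 : 3 ≤ n / r := (Nat.le_div_iff_mul_le hr).2 (by linarith)
  exact exists_perm_recolor (fun x : Fin n => (x : ℕ) % r) hab hab' hnab.symm hnab'.symm
    (by split_ifs at hsize hsize' <;> omega) (by split_ifs at hsize hsize' <;> omega)
    (by split_ifs at hsize <;> omega)

section AddedEdges
variable {α : Type*} {F : SimpleGraph α} {n r s : ℕ} {u v : Fin s → Fin n}

lemma exists_mem_verts_of_mem_copies (hr : 0 < r) (hF : ¬F.Colorable r)
    {H : Subgraph (turanGraph n r ⊔ fromEdgeSet {e | ∃ i, e = s(u i, v i)})}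
    (hH : H ∈ copies F _) : ∃ i, u i ∈ H.verts ∧ v i ∈ H.verts := by
  by_contra! h
  refine hF (colorable_of_mem_copies hH (fun x y hxy => ?_) (turanGraph_colorable hr))
  rcases H.adj_sub hxy with hT | ⟨⟨i, he⟩, -⟩
  · exact hT
  · rcases Sym2.eq_iff.1 he with ⟨rfl, rfl⟩ | ⟨rfl, rfl⟩
    · exact absurd (H.edge_vert hxy.symm) (h i (H.edge_vert hxy))
    · exact absurd (H.edge_vert hxy) (h i (H.edge_vert hxy.symm))

lemma adj_perm_of_avoids {w : Fin n} {π : Equiv.Perm (Fin n)} {i : Fin s} {a b : Fin n}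
    (hπu : π (u i) = a) (hπv : π (v i) = b)
    (hπ : ∀ x y, x ≠ w → y ≠ w →
      (turanGraph n r).Adj x y → (turanGraph n r).Adj (π x) (π y))
    {H : Subgraph (turanGraph n r ⊔ fromEdgeSet {e | ∃ i, e = s(u i, v i)})}
    (hw : w ∉ H.verts) (hu : ∀ j ≠ i, u j ∉ H.verts) {x y : Fin n} (hxy : H.Adj x y) :
    (turanGraph n r ⊔ fromEdgeSet {s(a, b)}).Adj (π x) (π y) := by
  rcases H.adj_sub hxy with hT | ⟨⟨j, he⟩, -⟩
  · exact Or.inl (hπ x y (ne_of_mem_of_not_mem (H.edge_vert hxy) hw)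
      (ne_of_mem_of_not_mem (H.edge_vert hxy.symm) hw) hT)
  · have hji : j = i := by
      by_contra hji
      rcases Sym2.eq_iff.1 he with ⟨rfl, -⟩ | ⟨-, rfl⟩
      · exact hu j hji (H.edge_vert hxy)
      · exact hu j hji (H.edge_vert hxy.symm)
    subst hji
    refine Or.inr ⟨?_, π.injective.ne hxy.ne⟩
    rcases Sym2.eq_iff.1 he with ⟨rfl, rfl⟩ | ⟨rfl, rfl⟩ <;> simp [hπu, hπv, Sym2.eq_swap]

variable [Fintype α]

lemma ncard_copies_through_le (hr : 0 < r) (hn : 3 * r ≤ n) (hu : Function.Injective u)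
    (huv : ∀ i j, u i ≠ v j) (hpart : ∀ i, ¬(turanGraph n r).Adj (u i) (v i)) {a b : Fin n}
    (hab : a ≠ b) (hnab : ¬(turanGraph n r).Adj a b) (i : Fin s) :
    {H ∈ copies F (turanGraph n r ⊔ fromEdgeSet {e | ∃ i, e = s(u i, v i)}) |
        u i ∈ H.verts ∧ v i ∈ H.verts}.ncard ≤
      copyCount' F (turanGraph n r ⊔ fromEdgeSet {s(a, b)}) +
        (s + 1) * (Fintype.card α ^ 3 * n ^ (Fintype.card α - 3)) := by
  obtain ⟨w, hwu, hwv, π, hπu, hπv, hπ⟩ :=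
    turanGraph_exists_perm hr hn (huv i i) hab (hpart i) hnab
  set X : Finset (Fin n) := insert w ((Finset.univ.erase i).image u)
  have hX : ∀ x ∈ X, x ≠ u i ∧ x ≠ v i := by
    simp only [X, Finset.mem_insert, Finset.mem_image, Finset.mem_erase]
    rintro x (rfl | ⟨j, ⟨hji, -⟩, rfl⟩)
    exacts [⟨hwu, hwv⟩, ⟨hu.ne hji, huv j i⟩]
  have hXcard : X.card ≤ s + 1 :=
    (Finset.card_insert_le _ _).trans (by grw [Finset.card_image_le, Finset.card_erase_le]; simp)
  set G := turanGraph n r ⊔ fromEdgeSet {e | ∃ i, e = s(u i, v i)}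
  set G₂ := turanGraph n r ⊔ fromEdgeSet {s(a, b)}
  have havoid : {H ∈ copies F G | ∀ x ∈ X, x ∉ H.verts}.ncard ≤ copyCount' F G₂ :=
    calc _ ≤ {H ∈ copies F G | ∀ x y, H.Adj x y → (G₂.comap π).Adj x y}.ncard := by
          refine Set.ncard_le_ncard fun H ⟨hH, hXH⟩ => ⟨hH, fun x y hxy => ?_⟩
          refine adj_perm_of_avoids hπu hπv hπ (hXH w (Finset.mem_insert_self _ _))
            (fun j hj => hXH _ ?_) hxy
          exact Finset.mem_insert_of_mem (Finset.mem_image_of_mem u (by simpa using hj))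
      _ ≤ copyCount' F (G₂.comap π) := ncard_copies_le_copyCount'_of_adj
      _ ≤ copyCount' F G₂ := copyCount'_le_of_copy (Iso.comap π G₂).toCopy
  have hthree : ∀ x ∈ X,
      {H ∈ copies F G | ↑({u i, v i, x} : Finset (Fin n)) ⊆ H.verts}.ncard ≤
        Fintype.card α ^ 3 * n ^ (Fintype.card α - 3) := by
    intro x hx
    have h3 : ({u i, v i, x} : Finset (Fin n)).card = 3 :=
      Finset.card_eq_three.2 ⟨_, _, _, huv i i, (hX x hx).1.symm, (hX x hx).2.symm, rfl⟩
    simpa [h3] using ncard_copies_verts_supset_le (F := F) (G := G) {u i, v i, x}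
  have hcover : {H ∈ copies F G | u i ∈ H.verts ∧ v i ∈ H.verts} ⊆
      {H ∈ copies F G | ∀ x ∈ X, x ∉ H.verts} ∪
        ⋃ x ∈ X, {H ∈ copies F G | ↑({u i, v i, x} : Finset (Fin n)) ⊆ H.verts} := by
    rintro H ⟨hH, hui, hvi⟩
    by_cases h : ∃ x ∈ X, x ∈ H.verts
    · obtain ⟨x, hx, hxH⟩ := h
      exact Or.inr (Set.mem_biUnion hx ⟨hH, by simp [Set.insert_subset_iff, *]⟩)
    · exact Or.inl ⟨hH, fun x hx hxH => h ⟨x, hx, hxH⟩⟩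
  calc _ ≤ _ := Set.ncard_le_ncard hcover
    _ ≤ copyCount' F G₂ + ∑ _x ∈ X, Fintype.card α ^ 3 * n ^ (Fintype.card α - 3) :=
        (Set.ncard_union_le _ _).trans (add_le_add havoid
          ((X.set_ncard_biUnion_le _).trans (Finset.sum_le_sum hthree)))
    _ ≤ _ := by
        rw [Finset.sum_const, smul_eq_mul]
        gcongr

lemma copyCount'_turanGraph_sup_le (hr : 0 < r) (hn : 3 * r ≤ n) (hF : ¬F.Colorable r)
    (hu : Function.Injective u) (huv : ∀ i j, u i ≠ v j)
    (hpart : ∀ i, ¬(turanGraph n r).Adj (u i) (v i)) {a b : Fin n} (hab : a ≠ b)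
    (hnab : ¬(turanGraph n r).Adj a b) :
    copyCount' F (turanGraph n r ⊔ fromEdgeSet {e | ∃ i, e = s(u i, v i)}) ≤
      s * copyCount' F (turanGraph n r ⊔ fromEdgeSet {s(a, b)}) +
        s * ((s + 1) * (Fintype.card α ^ 3 * n ^ (Fintype.card α - 3))) := by
  have hcover : copies F (turanGraph n r ⊔ fromEdgeSet {e | ∃ i, e = s(u i, v i)}) ⊆
      ⋃ i ∈ (Finset.univ : Finset (Fin s)),
        {H ∈ copies F _ | u i ∈ H.verts ∧ v i ∈ H.verts} :=
    fun H hH =>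
      let ⟨i, hi⟩ := exists_mem_verts_of_mem_copies hr hF hH
      Set.mem_biUnion (Finset.mem_univ i) ⟨hH, hi⟩
  rw [copyCount'_eq_ncard_copies]
  grw [Set.ncard_le_ncard hcover, Finset.set_ncard_biUnion_le]
  grw [Finset.sum_le_sum fun i _ => ncard_copies_through_le hr hn hu huv hpart hab hnab i]
  simp [mul_add]

end AddedEdges

end SimpleGraph

lemma IsCritical.not_colorable {α : Type*} {F : SimpleGraph α} {k : ℕ} (hk : 0 < k)
    (hF : IsCritical k F) : ¬F.Colorable (k - 1) := fun h => by
  have := h.chromaticNumber_le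
  rw [hF.1, Nat.cast_le] at this
  omega

lemma exists_eq_cnF {α : Type*} (F : SimpleGraph α) {k n : ℕ} (hk : 2 ≤ k) (hn : k ≤ n) :
    ∃ a b : Fin n, a ≠ b ∧ ¬(turanGraph n (k - 1)).Adj a b ∧
      cnF k n F = copyCount' F (turanGraph n (k - 1) ⊔ fromEdgeSet {s(a, b)}) := by
  obtain ⟨a, b, hab, hnab, h⟩ := Nat.sInf_mem (s := {c | ∃ a b : Fin n, a ≠ b ∧
      ¬(turanGraph n (k - 1)).Adj a b ∧
        c = copyCount' F (turanGraph n (k - 1) ⊔ fromEdgeSet {s(a, b)})})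
    ⟨_, ⟨0, by omega⟩, ⟨k - 1, by omega⟩, by simp [Fin.ext_iff]; omega,
      by simp [turanGraph_adj], rfl⟩
  exact ⟨a, b, hab, hnab, h⟩

theorem stmt_10_general {α : Type*} [Fintype α] (k s f : ℕ) (F : SimpleGraph α)
    (hk : 3 ≤ k) (hF : IsCritical k F) (hf : Fintype.card α = f) :
    ∃ C' : ℝ, ∃ n₀ : ℕ, ∀ n ≥ n₀, ∀ u v : Fin s → Fin n,
      Function.Injective u → Function.Injective v → (∀ i j, u i ≠ v j) →
      (∀ i j : Fin s,
        (u i : ℕ) % (k - 1) = (u j : ℕ) % (k - 1) ∧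
        (v i : ℕ) % (k - 1) = (u j : ℕ) % (k - 1)) →
      (copyCount' F (turanGraph n (k - 1) ⊔
          fromEdgeSet {e : Sym2 (Fin n) | ∃ i, e = s(u i, v i)}) : ℝ) ≤
        (s : ℝ) * cnF k n F + C' * (n : ℝ) ^ (f - 3) := by
  refine ⟨s * (s + 1) * f ^ 3, 3 * (k - 1), fun n hn u v hu _ huv hmod => ?_⟩
  obtain ⟨a, b, hab, hnab, hcnF⟩ := exists_eq_cnF F (by omega) (by omega : k ≤ n)
  have hpart : ∀ i, ¬(turanGraph n (k - 1)).Adj (u i) (v i) := fun i => by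
    simp [turanGraph_adj, (hmod i i).2]
  have key := copyCount'_turanGraph_sup_le (by omega) hn (hF.not_colorable (by omega)) hu huv
    hpart hab hnab
  rw [← hcnF, hf] at key
  calc _ ≤ ((s * cnF k n F + s * ((s + 1) * (f ^ 3 * n ^ (f - 3))) : ℕ) : ℝ) := by
        exact_mod_cast key
    _ = _ := by push_cast; ring

/-- adding `s` pairwise disjoint edges inside one part of the Turán graph
`T_{k-1}(n)` produces at most `s·c(n,F) + C'·n^{f-3}` copies of a `k`-critical graph `F`. -/
theorem stmt_10 {α : Type*} [Fintype α] (k s f : ℕ) (F : SimpleGraph α)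
    (hk : 3 ≤ k) (hs : 1 ≤ s) (hF : IsCritical k F) (hf : Fintype.card α = f) :
    ∃ C' : ℝ, ∃ n₀ : ℕ, ∀ n ≥ n₀, ∀ u v : Fin s → Fin n,
      Function.Injective u → Function.Injective v → (∀ i j, u i ≠ v j) →
      (∀ i j : Fin s,
        (u i : ℕ) % (k - 1) = (u j : ℕ) % (k - 1) ∧
        (v i : ℕ) % (k - 1) = (u j : ℕ) % (k - 1)) →
      (copyCount' F (turanGraph n (k - 1) ⊔
          fromEdgeSet {e : Sym2 (Fin n) | ∃ i, e = s(u i, v i)}) : ℝ) ≤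
        (s : ℝ) * cnF k n F + C' * (n : ℝ) ^ (f - 3) :=
  stmt_10_general k s f F hk hF hf
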